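/- Let n ≥ 3 and define G : ℕ → ℕ by G(x) = mex {G(x-s) : s ∈ {2, 4n, 4n+2}, s ≤ x}. Then G is periodic with period 8n: for all x ∈ ℕ, G(x + 8n) = G(x). -/
import Mathlib

noncomputable def mex (T : Set ℕ) : ℕ := sInf {k : ℕ | k ∉ T}

def subRec (n : ℕ) (G : ℕ → ℕ) : Prop :=
  ∀ x : ℕ, G x = mex {y : ℕ | ∃ s ∈ ({2, 4*n, 4*n+2} : Set ℕ), s ≤ x ∧ y = G (x - s)}

def passRec (n : ℕ) (G0 G1 : ℕ → ℕ) : Prop :=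
  G1 0 = 0 ∧ G1 1 = 0 ∧
  ∀ x : ℕ, 2 ≤ x →
    G1 x = mex ({y : ℕ | ∃ s ∈ ({2, 4*n, 4*n+2} : Set ℕ), s ≤ x ∧ y = G1 (x - s)} ∪ {G0 x})

def gg (n r : ℕ) : ℕ := r / 2 % 2 + (if r < 4*n then 0 else 2)

lemma mex_eq_of (T : Set ℕ) (m : ℕ) (h1 : m ∉ T) (h2 : ∀ k < m, k ∈ T) : mex T = m := by
  have hm : m ∈ {k : ℕ | k ∉ T} := h1
  refine le_antisymm (Nat.sInf_le hm) ?_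
  by_contra h
  push_neg at h
  exact (Nat.sInf_mem ⟨m, hm⟩) (h2 _ h)

lemma mem_T (n x y : ℕ) (G : ℕ → ℕ) :
    (y ∈ {y : ℕ | ∃ s ∈ ({2, 4*n, 4*n+2} : Set ℕ), s ≤ x ∧ y = G (x - s)}) ↔
      ((2 ≤ x ∧ y = G (x-2)) ∨ (4*n ≤ x ∧ y = G (x - 4*n)) ∨
        (4*n+2 ≤ x ∧ y = G (x - (4*n+2)))) := by
  simp only [Set.mem_setOf_eq, Set.mem_insert_iff, Set.mem_singleton_iff]
  constructor
  · rintro ⟨s, (rfl|rfl|rfl), hs, rfl⟩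
    · exact Or.inl ⟨hs, rfl⟩
    · exact Or.inr (Or.inl ⟨hs, rfl⟩)
    · exact Or.inr (Or.inr ⟨hs, rfl⟩)
  · rintro (⟨h, rfl⟩|⟨h, rfl⟩|⟨h, rfl⟩)
    · exact ⟨2, Or.inl rfl, h, rfl⟩
    · exact ⟨4*n, Or.inr (Or.inl rfl), h, rfl⟩
    · exact ⟨4*n+2, Or.inr (Or.inr rfl), h, rfl⟩

lemma mex_T_zero (n : ℕ) (hn : 3 ≤ n) (G : ℕ → ℕ) (x : ℕ) (hx : x < 2) :
    mex {y : ℕ | ∃ s ∈ ({2, 4*n, 4*n+2} : Set ℕ), s ≤ x ∧ y = G (x - s)} = 0 := by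
  apply mex_eq_of
  · rw [mem_T]; rintro (⟨h,-⟩|⟨h,-⟩|⟨h,-⟩) <;> omega
  · exact fun k hk => absurd hk (Nat.not_lt_zero k)

lemma mex_T_one (n : ℕ) (hn : 3 ≤ n) (G : ℕ → ℕ) (x a m : ℕ) (hx1 : 2 ≤ x) (hx2 : x < 4*n)
    (h2 : G (x-2) = a) (hne : m ≠ a) (hlt : ∀ k < m, k = a) :
    mex {y : ℕ | ∃ s ∈ ({2, 4*n, 4*n+2} : Set ℕ), s ≤ x ∧ y = G (x - s)} = m := by
  apply mex_eq_of
  · rw [mem_T]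
    rintro (⟨-,h⟩|⟨h,-⟩|⟨h,-⟩)
    · rw [h2] at h; exact hne h
    · omega
    · omega
  · intro k hk
    rw [mem_T]
    obtain rfl := hlt k hk
    exact Or.inl ⟨hx1, h2.symm⟩

lemma mex_T_two (n : ℕ) (hn : 3 ≤ n) (G : ℕ → ℕ) (x a b m : ℕ) (hx1 : 4*n ≤ x)
    (hx2 : x < 4*n+2) (h2 : G (x-2) = a) (h4 : G (x-4*n) = b)
    (hne : m ≠ a ∧ m ≠ b) (hlt : ∀ k < m, k = a ∨ k = b) :
    mex {y : ℕ | ∃ s ∈ ({2, 4*n, 4*n+2} : Set ℕ), s ≤ x ∧ y = G (x - s)} = m := by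
  apply mex_eq_of
  · rw [mem_T]
    rintro (⟨-,h⟩|⟨-,h⟩|⟨h,-⟩)
    · rw [h2] at h; exact hne.1 h
    · rw [h4] at h; exact hne.2 h
    · omega
  · intro k hk
    rw [mem_T]
    rcases hlt k hk with rfl | rfl
    · exact Or.inl ⟨by omega, h2.symm⟩
    · exact Or.inr (Or.inl ⟨hx1, h4.symm⟩)

lemma mex_T_full (n : ℕ) (hn : 3 ≤ n) (G : ℕ → ℕ) (x a b c m : ℕ) (hx : 4*n+2 ≤ x)
    (h2 : G (x-2) = a) (h4 : G (x-4*n) = b) (h6 : G (x-(4*n+2)) = c)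
    (hne : m ≠ a ∧ m ≠ b ∧ m ≠ c) (hlt : ∀ k < m, k = a ∨ k = b ∨ k = c) :
    mex {y : ℕ | ∃ s ∈ ({2, 4*n, 4*n+2} : Set ℕ), s ≤ x ∧ y = G (x - s)} = m := by
  apply mex_eq_of
  · rw [mem_T]
    rintro (⟨-,h⟩|⟨-,h⟩|⟨-,h⟩)
    · rw [h2] at h; exact hne.1 h
    · rw [h4] at h; exact hne.2.1 h
    · rw [h6] at h; exact hne.2.2 h
  · intro k hk
    rw [mem_T]
    rcases hlt k hk with rfl | rfl | rfl
    · exact Or.inl ⟨by omega, h2.symm⟩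
    · exact Or.inr (Or.inl ⟨by omega, h4.symm⟩)
    · exact Or.inr (Or.inr ⟨hx, h6.symm⟩)

lemma main_lemma (n : ℕ) (hn : 3 ≤ n) (G : ℕ → ℕ) (hG : subRec n G) :
    ∀ x r q, r < 8*n → x = 8*n*q + r → G x = gg n r := by
  intro x
  induction x using Nat.strong_induction_on with
  | _ x IH =>
    intro r q hr hx
    rw [hG x]
    rcases q with _ | q
    · have hx0 : x = r := by simpa using hx
      subst hx0
      by_cases h1 : x < 2
      · rw [show gg n x = 0 by simp only [gg]; split_ifs <;> omega]
        exact mex_T_zero n hn G x h1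
      · by_cases h2 : x < 4*n
        · refine mex_T_one n hn G x (gg n (x-2)) (gg n x) (by omega) h2
            (IH (x-2) (by omega) (x-2) 0 (by omega) (by simp)) ?_ ?_
          · simp only [gg]; split_ifs <;> omega
          · intro k hk; simp only [gg] at hk ⊢; split_ifs at hk ⊢ <;> omega
        · by_cases h3 : x < 4*n+2
          · refine mex_T_two n hn G x (gg n (x-2)) (gg n (x-4*n)) (gg n x) (by omega) h3
              (IH (x-2) (by omega) (x-2) 0 (by omega) (by simp))
              (IH (x-4*n) (by omega) (x-4*n) 0 (by omega) (by simp)) ?_ ?_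
            · simp only [gg]; split_ifs <;> omega
            · intro k hk; simp only [gg] at hk ⊢; split_ifs at hk ⊢ <;> omega
          · refine mex_T_full n hn G x (gg n (x-2)) (gg n (x-4*n)) (gg n (x-(4*n+2)))
              (gg n x) (by omega)
              (IH (x-2) (by omega) (x-2) 0 (by omega) (by simp))
              (IH (x-4*n) (by omega) (x-4*n) 0 (by omega) (by simp))
              (IH (x-(4*n+2)) (by omega) (x-(4*n+2)) 0 (by omega) (by simp)) ?_ ?_
            · simp only [gg]; split_ifs <;> omega
            · intro k hk; simp only [gg] at hk ⊢; split_ifs at hk ⊢ <;> omega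
    · have hx' : x = 8*n*q + 8*n + r := by rw [hx]; ring
      have hsucc : 8*n*(q+1) = 8*n*q + 8*n := by ring
      have hxbig : 4*n+2 ≤ x := by omega
      by_cases hr2 : r < 2
      · refine mex_T_full n hn G x (gg n (8*n+r-2)) (gg n (4*n+r)) (gg n (4*n-2+r))
          (gg n r) hxbig
          (IH (x-2) (by omega) (8*n+r-2) q (by omega) (by omega))
          (IH (x-4*n) (by omega) (4*n+r) q (by omega) (by omega))
          (IH (x-(4*n+2)) (by omega) (4*n-2+r) q (by omega) (by omega)) ?_ ?_
        · simp only [gg]; split_ifs <;> omega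
        · intro k hk; simp only [gg] at hk ⊢; split_ifs at hk ⊢ <;> omega
      · by_cases hr4 : r < 4*n
        · refine mex_T_full n hn G x (gg n (r-2)) (gg n (4*n+r)) (gg n (4*n-2+r))
            (gg n r) hxbig
            (IH (x-2) (by omega) (r-2) (q+1) (by omega) (by rw [hsucc]; omega))
            (IH (x-4*n) (by omega) (4*n+r) q (by omega) (by omega))
            (IH (x-(4*n+2)) (by omega) (4*n-2+r) q (by omega) (by omega)) ?_ ?_
          · simp only [gg]; split_ifs <;> omega
          · intro k hk; simp only [gg] at hk ⊢; split_ifs at hk ⊢ <;> omega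
        · by_cases hr6 : r < 4*n+2
          · refine mex_T_full n hn G x (gg n (r-2)) (gg n (r-4*n)) (gg n (4*n-2+r))
              (gg n r) hxbig
              (IH (x-2) (by omega) (r-2) (q+1) (by omega) (by rw [hsucc]; omega))
              (IH (x-4*n) (by omega) (r-4*n) (q+1) (by omega) (by rw [hsucc]; omega))
              (IH (x-(4*n+2)) (by omega) (4*n-2+r) q (by omega) (by omega)) ?_ ?_
            · simp only [gg]; split_ifs <;> omega
            · intro k hk; simp only [gg] at hk ⊢; split_ifs at hk ⊢ <;> omega
          · refine mex_T_full n hn G x (gg n (r-2)) (gg n (r-4*n)) (gg n (r-(4*n+2)))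
              (gg n r) hxbig
              (IH (x-2) (by omega) (r-2) (q+1) (by omega) (by rw [hsucc]; omega))
              (IH (x-4*n) (by omega) (r-4*n) (q+1) (by omega) (by rw [hsucc]; omega))
              (IH (x-(4*n+2)) (by omega) (r-(4*n+2)) (q+1) (by omega) (by rw [hsucc]; omega)) ?_ ?_
            · simp only [gg]; split_ifs <;> omega
            · intro k hk; simp only [gg] at hk ⊢; split_ifs at hk ⊢ <;> omega

theorem stmt (n : ℕ) (hn : 3 ≤ n) (G : ℕ → ℕ) (hG : subRec n G) :
    ∀ x : ℕ, G (x + 8*n) = G x := by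
  intro x
  have h8 : 0 < 8*n := by omega
  have hq : x = 8*n*(x/(8*n)) + x % (8*n) := (Nat.div_add_mod x (8*n)).symm
  have hr : x % (8*n) < 8*n := Nat.mod_lt x h8
  have h1 : G x = gg n (x % (8*n)) := main_lemma n hn G hG x _ _ hr hq
  have h2 : G (x + 8*n) = gg n (x % (8*n)) := by
    refine main_lemma n hn G hG (x + 8*n) (x % (8*n)) (x/(8*n) + 1) hr ?_
    rw [show 8*n*(x/(8*n)+1) = 8*n*(x/(8*n)) + 8*n by ring]
    omega
  rw [h1, h2]
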